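/- arXiv:0906.4396 — 2 statements merged into one kernel-verified Lean document; each statement's English description precedes it below -/
import Mathlib

section
/- Let R be a commutative ring, ≺ a monomial ordering on the standard monomial basis B of R⟨X₁,…,Xₙ⟩, and G a monic Gröbner basis of the ideal I = ⟨G⟩. Then every nonzero f ∈ R⟨X₁,…,Xₙ⟩ can be written as a finite sum f = Σ λ_{ij} s_{ij} g_i w_{ij} + r, where λ_{ij} ∈ R, s_{ij}, w_{ij} ∈ B, g_i ∈ G, LM(s_{ij} g_i w_{ij}) ≼ LM(f) whenever λ_{ij} ≠ 0, and r lies in the R-span of the set N(G) of normal monomials; moreover, the element r is uniquely determined by f (independent of the chosen expression of this shape), and f ∈ I if and only if r = 0. -/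
noncomputable section
open MonoidAlgebra
open scoped Classical

/-- Words in the alphabet `X_1, ..., X_n`: the standard monomial basis `B`. -/
abbrev Word (n : ℕ) : Type := FreeMonoid (Fin n)

/-- The free `R`-algebra `R⟨X_1, ..., X_n⟩`, realized as the monoid algebra of the
free monoid on `n` letters over `R`. -/
abbrev FreeAlg (R : Type) [CommRing R] (n : ℕ) : Type := MonoidAlgebra R (Word n)

variable {R : Type} [CommRing R] {n : ℕ}

/-- The monomial (word) `w` viewed as an element of the free algebra. -/
def mono (R : Type) [CommRing R] {n : ℕ} (w : Word n) : FreeAlg R n :=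
  MonoidAlgebra.of R (Word n) w

/-- A monomial ordering: a well-ordering on words compatible with two-sided multiplication. -/
def IsMonomialOrder (n : ℕ) [LinearOrder (Word n)] : Prop :=
  WellFoundedLT (Word n) ∧ ∀ w u v s : Word n, u < v → w * u * s < w * v * s

/-- The leading monomial of `f` (with junk value `1` for `f = 0`). -/
def LMon [LinearOrder (Word n)] (f : FreeAlg R n) : Word n :=
  if h : f = 0 then 1 else f.coeff.support.max'
    (Finsupp.support_nonempty_iff.mpr (fun h' => h (MonoidAlgebra.coeff_eq_zero.mp h')))

/-- The leading coefficient of `f`. -/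
def LCoef [LinearOrder (Word n)] (f : FreeAlg R n) : R := f.coeff (LMon f)

/-- `f` is monic: it is nonzero and its leading coefficient is `1`. -/
def IsMonic [LinearOrder (Word n)] (f : FreeAlg R n) : Prop := f ≠ 0 ∧ LCoef f = 1

/-- `v` divides `u` as words: `u = w * v * s` for some words `w, s`. -/
def MDvd {n : ℕ} (v u : Word n) : Prop := ∃ w s : Word n, u = w * v * s

/-- `G` is a monic Gröbner basis of the two-sided ideal `I`: every element of `G` is monic,
and the leading monomial of every nonzero element of `I` is divisible by the leading
monomial of some element of `G`. -/
def IsMonicGB [LinearOrder (Word n)] (G : Set (FreeAlg R n))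
    (I : TwoSidedIdeal (FreeAlg R n)) : Prop :=
  (∀ g ∈ G, IsMonic g) ∧ ∀ f ∈ I, f ≠ 0 → ∃ g ∈ G, MDvd (LMon g) (LMon f)

/-- The set `N(G)` of normal words modulo `G`: words not divisible by any `LM(g)`, `g ∈ G`. -/
def NormalWords [LinearOrder (Word n)] (G : Set (FreeAlg R n)) : Set (Word n) :=
  {u | ∀ g ∈ G, ¬ MDvd (LMon g) u}

/-- `r` is a remainder of `f` upon division by `G`: `f = Σ cᵢ • (sᵢ * gᵢ * wᵢ) + r` with
`gᵢ ∈ G`, `LM(sᵢ gᵢ wᵢ) ≼ LM(f)` whenever `cᵢ ≠ 0`, and `r` in the `R`-span of the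
normal words `N(G)`. -/
def IsRem [LinearOrder (Word n)] (G : Set (FreeAlg R n)) (f r : FreeAlg R n) : Prop :=
  (∃ (k : ℕ) (c : Fin k → R) (s w : Fin k → Word n) (g : Fin k → FreeAlg R n),
    (∀ i, g i ∈ G) ∧
    f = (∑ i, c i • (mono R (s i) * g i * mono R (w i))) + r ∧
    ∀ i, c i ≠ 0 → LMon (mono R (s i) * g i * mono R (w i)) ≤ LMon f) ∧
  r ∈ Submodule.span R (mono R '' NormalWords G)

/-!
The remainders of `f` are exactly the decompositions `f = q + r` with `q` in the `R`-span of the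
multiples `s g w` (`g ∈ G`) whose leading monomial is at most `LM(f)`, and `r` in the span of the
normal words. Every word `v` decomposes in this way with bound `v`: either `v` is normal, or
`v = s LM(g) w` and `v = s g w - (s g w - v)`, where `s g w - v` only involves words `< v`, so
well-founded induction applies; by linearity every `f` decomposes. Since `f - r` lies in the ideal
`I`, two remainders differ by an element of `I` supported on normal words, and the Gröbner basis
property forces such an element to vanish. The same argument gives `f ∈ I ↔ r = 0`.
-/

theorem mono_eq_single (w : Word n) : mono R w = MonoidAlgebra.single w 1 := rfl

theorem span_mono_image_eq_supported (S : Set (Word n)) :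
    Submodule.span R (mono R '' S) = MonoidAlgebra.supported R R S :=
  (MonoidAlgebra.supported_eq_span_single R S).symm

theorem mem_of_forall_mem_support {M : Submodule R (FreeAlg R n)} {f : FreeAlg R n}
    (h : ∀ b ∈ f.coeff.support, mono R b ∈ M) : f ∈ M := by
  have hf : f ∈ Submodule.span R (mono R '' f.coeff.support) := by
    rw [span_mono_image_eq_supported]
    exact MonoidAlgebra.mem_supported.mpr subset_rfl
  exact Submodule.span_le.mpr (by rintro _ ⟨b, hb, rfl⟩; exact h b hb) hf

theorem coeff_mono_mul_mul_mono (s w b : Word n) (g : FreeAlg R n) :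
    (mono R s * g * mono R w).coeff (s * b * w) = g.coeff b := by
  simp [mono_eq_single]

theorem exists_eq_of_mem_support_mono_mul_mul_mono {s w b : Word n} {g : FreeAlg R n}
    (hb : b ∈ (mono R s * g * mono R w).coeff.support) :
    ∃ a ∈ g.coeff.support, s * a * w = b := by
  obtain ⟨c, hc, rfl⟩ := Finset.mem_image.mp
    (MonoidAlgebra.support_coeff_mul_single_subset (mono R s * g) 1 w hb)
  obtain ⟨a, ha, rfl⟩ := Finset.mem_image.mp
    (MonoidAlgebra.support_coeff_single_mul_subset g 1 s hc)
  exact ⟨a, ha, rfl⟩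

section LeadingMonomial

variable [LinearOrder (Word n)]

theorem lMon_mem_support {f : FreeAlg R n} (hf : f ≠ 0) : LMon f ∈ f.coeff.support := by
  rw [LMon, dif_neg hf]
  exact Finset.max'_mem _ _

theorem le_lMon {f : FreeAlg R n} {b : Word n} (hb : b ∈ f.coeff.support) : b ≤ LMon f := by
  have hf : f ≠ 0 := by rintro rfl; simp at hb
  rw [LMon, dif_neg hf]
  exact Finset.le_max' _ _ hb

theorem lMon_eq_of_mem_support {f : FreeAlg R n} {v : Word n} (hv : v ∈ f.coeff.support)
    (hle : ∀ b ∈ f.coeff.support, b ≤ v) : LMon f = v :=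
  le_antisymm (hle _ (lMon_mem_support (by rintro rfl; simp at hv))) (le_lMon hv)

theorem lMon_mono_mul_mul_mono (hord : IsMonomialOrder n) (s w : Word n) {g : FreeAlg R n}
    (hg : g ≠ 0) : LMon (mono R s * g * mono R w) = s * LMon g * w := by
  refine lMon_eq_of_mem_support ?_ fun b hb => ?_
  · rw [Finsupp.mem_support_iff, coeff_mono_mul_mul_mono]
    exact Finsupp.mem_support_iff.mp (lMon_mem_support hg)
  · obtain ⟨a, ha, rfl⟩ := exists_eq_of_mem_support_mono_mul_mul_mono hb
    have hmono : StrictMono (fun b => s * b * w) := fun _ _ h => hord.2 s _ _ w h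
    exact hmono.monotone (le_lMon ha)

theorem IsMonic.mono_mul_mul_mono (hord : IsMonomialOrder n) (s w : Word n) {g : FreeAlg R n}
    (hg : IsMonic g) : IsMonic (mono R s * g * mono R w) := by
  refine ⟨fun h => ?_, ?_⟩
  · have := coeff_mono_mul_mul_mono s w (LMon g) g
    rw [h] at this
    exact Finsupp.mem_support_iff.mp (lMon_mem_support hg.1) this.symm
  · rw [LCoef, lMon_mono_mul_mul_mono hord s w hg.1, coeff_mono_mul_mul_mono]
    exact hg.2

theorem IsMonic.lt_lMon_of_mem_support_sub {f : FreeAlg R n} (hf : IsMonic f) {b : Word n}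
    (hb : b ∈ (f - mono R (LMon f)).coeff.support) : b < LMon f := by
  have hne : b ≠ LMon f := by
    rintro rfl
    simp [mono_eq_single, show f.coeff (LMon f) = 1 from hf.2] at hb
  refine lt_of_le_of_ne ?_ hne
  rw [MonoidAlgebra.coeff_sub] at hb
  rcases Finset.mem_union.mp (Finsupp.support_sub hb) with hb | hb
  · exact le_lMon hb
  · simp [mono_eq_single, hne] at hb

end LeadingMonomial

section Division

variable [LinearOrder (Word n)] {G : Set (FreeAlg R n)}

variable (G) in
def boundedMultiples (u : Word n) : Set (FreeAlg R n) :=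
  {p | LMon p ≤ u ∧ ∃ s, ∃ g ∈ G, ∃ w, p = mono R s * g * mono R w}

theorem span_boundedMultiples_sup_mono {u v : Word n} (huv : u ≤ v) :
    Submodule.span R (boundedMultiples G u) ⊔ Submodule.span R (mono R '' NormalWords G) ≤
      Submodule.span R (boundedMultiples G v) ⊔ Submodule.span R (mono R '' NormalWords G) := by
  have hsub : boundedMultiples G u ⊆ boundedMultiples G v := fun _ hp => ⟨hp.1.trans huv, hp.2⟩
  exact sup_le_sup_right (Submodule.span_mono hsub) _

theorem mem_span_of_mem_span_boundedMultiples {u : Word n} {p : FreeAlg R n}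
    (hp : p ∈ Submodule.span R (boundedMultiples G u)) : p ∈ TwoSidedIdeal.span G := by
  have hle : Submodule.span R (boundedMultiples G u) ≤
      (TwoSidedIdeal.span G).asIdeal.restrictScalars R := by
    rw [Submodule.span_le]
    rintro _ ⟨-, s, g, hg, w, rfl⟩
    exact (TwoSidedIdeal.span G).mul_mem_right _ _
      ((TwoSidedIdeal.span G).mul_mem_left _ _ (TwoSidedIdeal.subset_span hg))
  exact TwoSidedIdeal.mem_asIdeal.mp (hle hp)

theorem isRem_iff {f r : FreeAlg R n} :
    IsRem G f r ↔ f - r ∈ Submodule.span R (boundedMultiples G (LMon f)) ∧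
      r ∈ Submodule.span R (mono R '' NormalWords G) := by
  refine and_congr_left' ⟨?_, ?_⟩
  · rintro ⟨k, c, s, w, g, hg, rfl, hle⟩
    rw [add_sub_cancel_right]
    refine Submodule.sum_mem _ fun i _ => ?_
    by_cases hc : c i = 0
    · simp [hc]
    · exact Submodule.smul_mem _ _ (Submodule.subset_span ⟨hle i hc, s i, g i, hg i, w i, rfl⟩)
  · intro h
    obtain ⟨k, c, p, hp⟩ := Submodule.mem_span_set'.mp h
    choose hle s g hg w hpe using fun i => (p i).2
    refine ⟨k, c, s, w, g, hg, ?_, fun i _ => hpe i ▸ hle i⟩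
    simp_rw [← hpe, hp, sub_add_cancel]

theorem IsRem.sub_mem_span {f r : FreeAlg R n} (hr : IsRem G f r) : f - r ∈ TwoSidedIdeal.span G :=
  mem_span_of_mem_span_boundedMultiples (isRem_iff.mp hr).1

theorem mono_mem_span_boundedMultiples_sup (hord : IsMonomialOrder n)
    (hG : ∀ g ∈ G, IsMonic g) (v : Word n) :
    mono R v ∈ Submodule.span R (boundedMultiples G v) ⊔
      Submodule.span R (mono R '' NormalWords G) := by
  induction v using hord.1.wf.induction with
  | _ v ih =>
  by_cases hv : v ∈ NormalWords G
  · exact Submodule.mem_sup_right (Submodule.subset_span ⟨v, hv, rfl⟩)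
  simp only [NormalWords, MDvd, Set.mem_ofPred_eq, not_forall, not_not] at hv
  obtain ⟨g, hg, s, w, rfl⟩ := hv
  set p := mono R s * g * mono R w
  have hp : IsMonic p := (hG g hg).mono_mul_mul_mono hord s w
  have hlead : LMon p = s * LMon g * w := lMon_mono_mul_mul_mono hord s w (hG g hg).1
  have hmul : p ∈ boundedMultiples G (s * LMon g * w) := ⟨hlead.le, s, g, hg, w, rfl⟩
  have htail : p - mono R (s * LMon g * w) ∈
      Submodule.span R (boundedMultiples G (s * LMon g * w)) ⊔
        Submodule.span R (mono R '' NormalWords G) := by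
    refine mem_of_forall_mem_support fun b hb => ?_
    rw [← hlead] at hb ⊢
    have hlt := hp.lt_lMon_of_mem_support_sub hb
    exact span_boundedMultiples_sup_mono hlt.le (ih b (hlead ▸ hlt))
  rw [← sub_sub_cancel p (mono R (s * LMon g * w))]
  exact Submodule.sub_mem _ (Submodule.mem_sup_left (Submodule.subset_span hmul)) htail

theorem exists_isRem (hord : IsMonomialOrder n) (hG : ∀ g ∈ G, IsMonic g) (f : FreeAlg R n) :
    ∃ r, IsRem G f r := by
  have hf : f ∈ Submodule.span R (boundedMultiples G (LMon f)) ⊔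
      Submodule.span R (mono R '' NormalWords G) :=
    mem_of_forall_mem_support fun b hb =>
      span_boundedMultiples_sup_mono (le_lMon hb) (mono_mem_span_boundedMultiples_sup hord hG b)
  obtain ⟨q, hq, r, hr, rfl⟩ := Submodule.mem_sup.mp hf
  exact ⟨r, isRem_iff.mpr ⟨by rwa [add_sub_cancel_right], hr⟩⟩

theorem IsMonicGB.eq_zero_of_mem_span_normalWords {I : TwoSidedIdeal (FreeAlg R n)}
    (hGB : IsMonicGB G I) {r : FreeAlg R n} (hrI : r ∈ I)
    (hrN : r ∈ Submodule.span R (mono R '' NormalWords G)) : r = 0 := by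
  by_contra hr
  obtain ⟨g, hg, hdvd⟩ := hGB.2 r hrI hr
  rw [span_mono_image_eq_supported, MonoidAlgebra.mem_supported] at hrN
  exact hrN (lMon_mem_support hr) g hg hdvd

theorem IsRem.unique (hGB : IsMonicGB G (TwoSidedIdeal.span G)) {f r r' : FreeAlg R n}
    (hr : IsRem G f r) (hr' : IsRem G f r') : r = r' := by
  refine sub_eq_zero.mp (hGB.eq_zero_of_mem_span_normalWords ?_ ?_)
  · rw [← sub_sub_sub_cancel_left r' r f]
    exact sub_mem hr'.sub_mem_span hr.sub_mem_span
  · exact Submodule.sub_mem _ (isRem_iff.mp hr).2 (isRem_iff.mp hr').2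

theorem IsRem.mem_span_iff (hGB : IsMonicGB G (TwoSidedIdeal.span G)) {f r : FreeAlg R n}
    (hr : IsRem G f r) : f ∈ TwoSidedIdeal.span G ↔ r = 0 := by
  refine ⟨fun hf => hGB.eq_zero_of_mem_span_normalWords ?_ (isRem_iff.mp hr).2, fun h => ?_⟩
  · simpa using sub_mem hf hr.sub_mem_span
  · simpa [h] using hr.sub_mem_span

end Division

theorem division_unique_remainder_general [LinearOrder (Word n)] (hord : IsMonomialOrder n)
    (G : Set (FreeAlg R n)) (hGB : IsMonicGB G (TwoSidedIdeal.span G))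
    (f : FreeAlg R n) :
    (∃ r, IsRem G f r) ∧
    (∀ r r', IsRem G f r → IsRem G f r' → r = r') ∧
    (∀ r, IsRem G f r → (f ∈ TwoSidedIdeal.span G ↔ r = 0)) :=
  ⟨exists_isRem hord hGB.1 f, fun _ _ hr hr' => hr.unique hGB hr',
    fun _ hr => hr.mem_span_iff hGB⟩

/-- If `G` is a monic Gröbner basis of `I = ⟨G⟩`, then every nonzero `f`
has a remainder upon division by `G`, the remainder is unique, and `f ∈ I` iff the
remainder is `0`. -/
theorem division_unique_remainder [LinearOrder (Word n)] (hord : IsMonomialOrder n)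
    (G : Set (FreeAlg R n)) (hGB : IsMonicGB G (TwoSidedIdeal.span G))
    (f : FreeAlg R n) (hf : f ≠ 0) :
    (∃ r, IsRem G f r) ∧
    (∀ r r', IsRem G f r → IsRem G f r' → r = r') ∧
    (∀ r, IsRem G f r → (f ∈ TwoSidedIdeal.span G ↔ r = 0)) :=
  division_unique_remainder_general hord G hGB f
end
end

section
/- Let R be a commutative ring and equip the free algebra R⟨X₁,…,Xₙ⟩ with a weight ℕ-gradation determined by positive integer degrees deg Xᵢ = nᵢ. Let I be an ideal of R⟨X₁,…,Xₙ⟩ and J = ⟨LH(I)⟩ the ideal generated by the ℕ-leading homogeneous elements of I. Then for every nonzero homogeneous element h of R⟨X₁,…,Xₙ⟩, h ∈ J if and only if h = LH(f) for some nonzero f ∈ I; consequently LH(J) = LH(I). -/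
noncomputable section
open MonoidAlgebra
open scoped Classical

variable {R : Type} [CommRing R] {n : ℕ}

/-- The weight degree of a word, for the weights `deg Xᵢ = d i`. -/
def wdeg {n : ℕ} (d : Fin n → ℕ) (w : Word n) : ℕ := ((FreeMonoid.toList w).map d).sum

/-- The maximal weight degree occurring in `f`. -/
def maxdeg (d : Fin n → ℕ) (f : FreeAlg R n) : ℕ := f.coeff.support.sup (wdeg d)

/-- The ℕ-leading homogeneous element `LH(f)` of `f`: the sum of the terms of `f` of
maximal weight degree. -/
def LH (d : Fin n → ℕ) (f : FreeAlg R n) : FreeAlg R n :=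
  ∑ w ∈ f.coeff.support.filter (fun w => wdeg d w = maxdeg d f), MonoidAlgebra.single w (f.coeff w)

/-- The set `LH(S)` of leading homogeneous elements of the nonzero elements of `S`. -/
def LHset (d : Fin n → ℕ) (S : Set (FreeAlg R n)) : Set (FreeAlg R n) :=
  {x | ∃ f ∈ S, f ≠ 0 ∧ x = LH d f}

/-- An ℕ-graded monomial ordering with respect to the weights `d`: a monomial ordering
such that words of smaller degree are smaller. -/
def IsGradedMonomialOrder {n : ℕ} (d : Fin n → ℕ) [LinearOrder (Word n)] : Prop :=
  IsMonomialOrder n ∧ ∀ u v : Word n, wdeg d u < wdeg d v → u < v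

/-- `f` is homogeneous with respect to the weight gradation `d`. -/
def IsHomog {n : ℕ} (d : Fin n → ℕ) (f : FreeAlg R n) : Prop :=
  ∃ p : ℕ, ∀ w ∈ f.coeff.support, wdeg d w = p

/-!
Let `V_p = {(f)_p : f ∈ I, deg f ≤ p}` (`leadingForms d I p`), where `(f)_p` is the degree-`p`
component of `f`. Its nonzero elements are exactly the `LH(f)` with `f ∈ I` of degree `p`, and,
unlike the set of those, it is an additive group; multiplying by a monomial of degree `q` on either
side maps `V_p` into `V_(p+q)`. Hence the elements all of whose components `(x)_p` lie in `V_p`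
form a two-sided ideal containing `LH(I)`, so it contains `J = ⟨LH(I)⟩`. For nonzero `x ∈ J` this
makes `LH(x)`, the top component of `x`, the leading homogeneous element of some `f ∈ I`.
-/

section Grading

variable (d : Fin n → ℕ)

lemma wdeg_mul (u v : Word n) : wdeg d (u * v) = wdeg d u + wdeg d v := by
  simp [wdeg, FreeMonoid.toList_mul]

lemma le_maxdeg {f : FreeAlg R n} {w : Word n} (hw : w ∈ f.coeff.support) :
    wdeg d w ≤ maxdeg d f :=
  Finset.le_sup hw

lemma maxdeg_le_iff {f : FreeAlg R n} {p : ℕ} :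
    maxdeg d f ≤ p ↔ ∀ w ∈ f.coeff.support, wdeg d w ≤ p :=
  Finset.sup_le_iff

lemma exists_wdeg_eq_maxdeg {f : FreeAlg R n} (hf : f ≠ 0) :
    ∃ w ∈ f.coeff.support, wdeg d w = maxdeg d f := by
  obtain ⟨w, hw, hmax⟩ := Finset.exists_mem_eq_sup _
    (Finsupp.support_nonempty_iff.mpr (mt coeff_eq_zero.mp hf)) (wdeg d)
  exact ⟨w, hw, hmax.symm⟩

lemma maxdeg_add_le (f g : FreeAlg R n) :
    maxdeg d (f + g) ≤ max (maxdeg d f) (maxdeg d g) := by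
  refine (maxdeg_le_iff d).mpr fun w hw => ?_
  rw [coeff_add] at hw
  rcases Finset.mem_union.mp (Finsupp.support_add hw) with hw | hw
  · exact le_max_of_le_left (le_maxdeg d hw)
  · exact le_max_of_le_right (le_maxdeg d hw)

lemma maxdeg_neg (f : FreeAlg R n) : maxdeg d (-f) = maxdeg d f := by
  simp only [maxdeg, coeff_neg, Finsupp.support_neg]

lemma maxdeg_single_mul_le (w : Word n) (c : R) (f : FreeAlg R n) :
    maxdeg d (single w c * f) ≤ wdeg d w + maxdeg d f := by
  refine (maxdeg_le_iff d).mpr fun u hu => ?_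
  obtain ⟨v, hv, rfl⟩ := Finset.mem_image.mp (support_coeff_single_mul_subset f c w hu)
  rw [wdeg_mul]
  exact Nat.add_le_add_left (le_maxdeg d hv) _

lemma maxdeg_mul_single_le (w : Word n) (c : R) (f : FreeAlg R n) :
    maxdeg d (f * single w c) ≤ maxdeg d f + wdeg d w := by
  refine (maxdeg_le_iff d).mpr fun u hu => ?_
  obtain ⟨v, hv, rfl⟩ := Finset.mem_image.mp (support_coeff_mul_single_subset f c w hu)
  rw [wdeg_mul]
  exact Nat.add_le_add_right (le_maxdeg d hv) _

def homogeneousComponent (p : ℕ) : FreeAlg R n →+ FreeAlg R n :=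
  coeffAddEquiv.symm.toAddMonoidHom.comp
    ((Finsupp.filterAddHom (wdeg d · = p)).comp coeffAddEquiv.toAddMonoidHom)

lemma coeff_homogeneousComponent (p : ℕ) (f : FreeAlg R n) (u : Word n) :
    (homogeneousComponent d p f).coeff u = if wdeg d u = p then f.coeff u else 0 := by
  simp [homogeneousComponent, Finsupp.filterAddHom, Finsupp.filter_apply]


lemma homogeneousComponent_single (p : ℕ) (w : Word n) (c : R) :
    homogeneousComponent d p (single w c) = if wdeg d w = p then single w c else 0 := by
  ext u
  simp only [coeff_homogeneousComponent, coeff_single, Finsupp.single_apply]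
  by_cases hu : w = u
  · subst hu; split_ifs <;> simp_all
  · split_ifs <;> simp [hu]

lemma wdeg_eq_of_mem_support_homogeneousComponent {p : ℕ} {f : FreeAlg R n} {w : Word n}
    (hw : w ∈ (homogeneousComponent d p f).coeff.support) : wdeg d w = p := by
  by_contra h
  simp [coeff_homogeneousComponent, h] at hw

lemma homogeneousComponent_eq_self {p : ℕ} {f : FreeAlg R n}
    (h : ∀ w ∈ f.coeff.support, wdeg d w = p) : homogeneousComponent d p f = f := by
  ext u
  rw [coeff_homogeneousComponent]
  by_cases hu : u ∈ f.coeff.support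
  · rw [if_pos (h u hu)]
  · rw [Finsupp.notMem_support_iff.mp hu, ite_self]

lemma homogeneousComponent_homogeneousComponent (p q : ℕ) (f : FreeAlg R n) :
    homogeneousComponent d p (homogeneousComponent d q f) =
      if p = q then homogeneousComponent d q f else 0 := by
  split_ifs with hpq
  · subst hpq
    exact homogeneousComponent_eq_self d fun w => wdeg_eq_of_mem_support_homogeneousComponent d
  · ext u
    simp only [coeff_homogeneousComponent]
    split_ifs <;> simp_all

lemma homogeneousComponent_single_mul (p : ℕ) (w : Word n) (c : R) (x : FreeAlg R n) :
    homogeneousComponent d p (single w c * x) =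
      if wdeg d w ≤ p then single w c * homogeneousComponent d (p - wdeg d w) x else 0 := by
  induction x using MonoidAlgebra.induction_linear with
  | zero => simp
  | add x y hx hy => split_ifs at hx hy ⊢ <;> simp_all [mul_add]
  | single v b =>
    simp only [single_mul_single, homogeneousComponent_single, wdeg_mul]
    split_ifs <;> first | rfl | omega | simp

lemma homogeneousComponent_mul_single (p : ℕ) (w : Word n) (c : R) (x : FreeAlg R n) :
    homogeneousComponent d p (x * single w c) =
      if wdeg d w ≤ p then homogeneousComponent d (p - wdeg d w) x * single w c else 0 := by
  induction x using MonoidAlgebra.induction_linear with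
  | zero => simp
  | add x y hx hy => split_ifs at hx hy ⊢ <;> simp_all [add_mul]
  | single v b =>
    simp only [single_mul_single, homogeneousComponent_single, wdeg_mul]
    split_ifs <;> first | rfl | omega | simp

lemma maxdeg_eq_of_homogeneousComponent_ne_zero {p : ℕ} {f : FreeAlg R n}
    (hf : maxdeg d f ≤ p) (hp : homogeneousComponent d p f ≠ 0) : maxdeg d f = p := by
  obtain ⟨w, hw⟩ := Finsupp.support_nonempty_iff.mpr (mt coeff_eq_zero.mp hp)
  have hwf : w ∈ f.coeff.support := by
    rw [Finsupp.mem_support_iff] at hw ⊢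
    rw [coeff_homogeneousComponent] at hw
    exact fun h => hw (by simp [h])
  exact le_antisymm hf (wdeg_eq_of_mem_support_homogeneousComponent d hw ▸ le_maxdeg d hwf)

lemma LH_eq_homogeneousComponent (f : FreeAlg R n) :
    LH d f = homogeneousComponent d (maxdeg d f) f := by
  ext u
  rw [coeff_homogeneousComponent, LH, coeff_sum, Finsupp.finsetSum_apply]
  simp only [coeff_single, Finsupp.single_apply, Finset.sum_ite_eq', Finset.mem_filter,
    Finsupp.mem_support_iff]
  by_cases hu : f.coeff u = 0 <;> simp [hu]

lemma LH_ne_zero {f : FreeAlg R n} (hf : f ≠ 0) : LH d f ≠ 0 := by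
  obtain ⟨w, hw, hmax⟩ := exists_wdeg_eq_maxdeg d hf
  refine mt (fun h => ?_) (Finsupp.mem_support_iff.mp hw)
  simpa [LH_eq_homogeneousComponent, coeff_homogeneousComponent, hmax] using
    congrArg (fun g : FreeAlg R n => g.coeff w) h

lemma isHomog_LH (f : FreeAlg R n) : IsHomog d (LH d f) := by
  rw [LH_eq_homogeneousComponent]
  exact ⟨_, fun w => wdeg_eq_of_mem_support_homogeneousComponent d⟩

lemma IsHomog.wdeg_eq_maxdeg {f : FreeAlg R n} (hf : IsHomog d f) {w : Word n}
    (hw : w ∈ f.coeff.support) : wdeg d w = maxdeg d f := by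
  obtain ⟨p, hp⟩ := hf
  rw [hp w hw]
  exact le_antisymm (hp w hw ▸ le_maxdeg d hw) ((maxdeg_le_iff d).mpr fun u hu => (hp u hu).le)

lemma IsHomog.LH_eq {f : FreeAlg R n} (hf : IsHomog d f) : LH d f = f := by
  rw [LH_eq_homogeneousComponent]
  exact homogeneousComponent_eq_self d fun w => hf.wdeg_eq_maxdeg d

end Grading

section LeadingForms

variable (d : Fin n → ℕ) (I : TwoSidedIdeal (FreeAlg R n))

def leadingForms (p : ℕ) : AddSubgroup (FreeAlg R n) where
  carrier := {x | ∃ f ∈ I, maxdeg d f ≤ p ∧ homogeneousComponent d p f = x}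
  zero_mem' := ⟨0, zero_mem I, by simp [maxdeg], map_zero _⟩
  add_mem' := by
    rintro _ _ ⟨f, hfI, hf, rfl⟩ ⟨g, hgI, hg, rfl⟩
    exact ⟨f + g, add_mem hfI hgI, (maxdeg_add_le d f g).trans (max_le hf hg), map_add _ f g⟩
  neg_mem' := by
    rintro _ ⟨f, hfI, hf, rfl⟩
    exact ⟨-f, neg_mem hfI, (maxdeg_neg d f).trans_le hf, map_neg _ f⟩

lemma exists_LH_eq_of_mem_leadingForms {p : ℕ} {x : FreeAlg R n}
    (hx : x ∈ leadingForms d I p) (hx0 : x ≠ 0) : ∃ f ∈ I, f ≠ 0 ∧ LH d f = x := by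
  obtain ⟨f, hfI, hf, rfl⟩ := hx
  refine ⟨f, hfI, fun h => hx0 (by rw [h, map_zero]), ?_⟩
  rw [LH_eq_homogeneousComponent, maxdeg_eq_of_homogeneousComponent_ne_zero d hf hx0]

lemma single_mul_mem_leadingForms {q : ℕ} (w : Word n) (c : R) {x : FreeAlg R n}
    (hx : x ∈ leadingForms d I q) : single w c * x ∈ leadingForms d I (wdeg d w + q) := by
  obtain ⟨f, hfI, hf, rfl⟩ := hx
  refine ⟨single w c * f, I.mul_mem_left _ _ hfI,
    (maxdeg_single_mul_le d w c f).trans (Nat.add_le_add_left hf _), ?_⟩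
  rw [homogeneousComponent_single_mul, if_pos (Nat.le_add_right _ _), Nat.add_sub_cancel_left]

lemma mul_single_mem_leadingForms {q : ℕ} (w : Word n) (c : R) {x : FreeAlg R n}
    (hx : x ∈ leadingForms d I q) : x * single w c ∈ leadingForms d I (q + wdeg d w) := by
  obtain ⟨f, hfI, hf, rfl⟩ := hx
  refine ⟨f * single w c, I.mul_mem_right _ _ hfI,
    (maxdeg_mul_single_le d w c f).trans (Nat.add_le_add_right hf _), ?_⟩
  rw [homogeneousComponent_mul_single, if_pos (Nat.le_add_left _ _), Nat.add_sub_cancel]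

lemma homogeneousComponent_LH_mem_leadingForms {f : FreeAlg R n} (hf : f ∈ I) (p : ℕ) :
    homogeneousComponent d p (LH d f) ∈ leadingForms d I p := by
  rw [LH_eq_homogeneousComponent, homogeneousComponent_homogeneousComponent]
  split_ifs with hp
  · exact ⟨f, hf, hp.ge, by rw [hp]⟩
  · exact zero_mem _

lemma homogeneousComponent_single_mul_mem_leadingForms (w : Word n) (c : R) {x : FreeAlg R n}
    (hx : ∀ q, homogeneousComponent d q x ∈ leadingForms d I q) (p : ℕ) :
    homogeneousComponent d p (single w c * x) ∈ leadingForms d I p := by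
  rw [homogeneousComponent_single_mul]
  split_ifs with hw
  · simpa only [Nat.add_sub_cancel' hw] using single_mul_mem_leadingForms d I w c (hx (p - wdeg d w))
  · exact zero_mem _

lemma homogeneousComponent_mul_single_mem_leadingForms (w : Word n) (c : R) {x : FreeAlg R n}
    (hx : ∀ q, homogeneousComponent d q x ∈ leadingForms d I q) (p : ℕ) :
    homogeneousComponent d p (x * single w c) ∈ leadingForms d I p := by
  rw [homogeneousComponent_mul_single]
  split_ifs with hw
  · simpa only [Nat.sub_add_cancel hw] using mul_single_mem_leadingForms d I w c (hx (p - wdeg d w))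
  · exact zero_mem _

lemma homogeneousComponent_mem_leadingForms_of_mem_span {x : FreeAlg R n}
    (hx : x ∈ TwoSidedIdeal.span (LHset d (I : Set (FreeAlg R n)))) (p : ℕ) :
    homogeneousComponent d p x ∈ leadingForms d I p := by
  induction hx using TwoSidedIdeal.span_induction generalizing p with
  | mem _ h =>
    obtain ⟨f, hf, -, rfl⟩ := h
    exact homogeneousComponent_LH_mem_leadingForms d I hf p
  | zero => simpa only [map_zero] using zero_mem _
  | add x y _ _ hx hy => simpa only [map_add] using add_mem (hx p) (hy p)
  | neg x _ hx => simpa only [map_neg] using neg_mem (hx p)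
  | left_absorb a x _ hx =>
    rw [← sum_coeff_single a, Finsupp.sum, Finset.sum_mul, map_sum]
    exact sum_mem fun w _ => homogeneousComponent_single_mul_mem_leadingForms d I w _ hx p
  | right_absorb b x _ hx =>
    rw [← sum_coeff_single b, Finsupp.sum, Finset.mul_sum, map_sum]
    exact sum_mem fun w _ => homogeneousComponent_mul_single_mem_leadingForms d I w _ hx p

lemma exists_LH_eq_LH_of_mem_span {x : FreeAlg R n}
    (hx : x ∈ TwoSidedIdeal.span (LHset d (I : Set (FreeAlg R n)))) (hx0 : x ≠ 0) :
    ∃ f ∈ I, f ≠ 0 ∧ LH d f = LH d x := by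
  refine exists_LH_eq_of_mem_leadingForms d I (p := maxdeg d x) ?_ (LH_ne_zero d hx0)
  rw [LH_eq_homogeneousComponent]
  exact homogeneousComponent_mem_leadingForms_of_mem_span d I hx _

end LeadingForms

theorem lh_ideal_homogeneous_membership_general (d : Fin n → ℕ)
    (I : TwoSidedIdeal (FreeAlg R n)) :
    (∀ h : FreeAlg R n, h ≠ 0 → IsHomog d h →
      (h ∈ TwoSidedIdeal.span (LHset d (I : Set (FreeAlg R n))) ↔
        ∃ f ∈ I, f ≠ 0 ∧ LH d f = h)) ∧
    LHset d ((TwoSidedIdeal.span (LHset d (I : Set (FreeAlg R n))) :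
        TwoSidedIdeal (FreeAlg R n)) : Set (FreeAlg R n)) =
      LHset d (I : Set (FreeAlg R n)) := by
  refine ⟨fun h hne hhom => ⟨fun hJ => ?_, ?_⟩, Set.ext fun x => ⟨?_, ?_⟩⟩
  · simpa only [hhom.LH_eq d] using exists_LH_eq_LH_of_mem_span d I hJ hne
  · rintro ⟨f, hf, hf0, rfl⟩
    exact TwoSidedIdeal.subset_span ⟨f, hf, hf0, rfl⟩
  · rintro ⟨g, hg, hg0, rfl⟩
    obtain ⟨f, hf, hf0, hfg⟩ := exists_LH_eq_LH_of_mem_span d I hg hg0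
    exact ⟨f, hf, hf0, hfg.symm⟩
  · rintro ⟨f, hf, hf0, rfl⟩
    exact ⟨LH d f, TwoSidedIdeal.subset_span ⟨f, hf, hf0, rfl⟩, LH_ne_zero d hf0,
      ((isHomog_LH d f).LH_eq d).symm⟩

/-- Let `J = ⟨LH(I)⟩`. A nonzero homogeneous element `h` lies in `J`
iff `h = LH(f)` for some nonzero `f ∈ I`; consequently `LH(J) = LH(I)`. -/
theorem lh_ideal_homogeneous_membership (d : Fin n → ℕ) (hd : ∀ i, 0 < d i)
    (I : TwoSidedIdeal (FreeAlg R n)) :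
    (∀ h : FreeAlg R n, h ≠ 0 → IsHomog d h →
      (h ∈ TwoSidedIdeal.span (LHset d (I : Set (FreeAlg R n))) ↔
        ∃ f ∈ I, f ≠ 0 ∧ LH d f = h)) ∧
    LHset d ((TwoSidedIdeal.span (LHset d (I : Set (FreeAlg R n))) :
        TwoSidedIdeal (FreeAlg R n)) : Set (FreeAlg R n)) =
      LHset d (I : Set (FreeAlg R n)) :=
  lh_ideal_homogeneous_membership_general d I
end
end
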